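/- arXiv:2201.13034 — 3 statements merged into one kernel-verified Lean document; each statement's English description precedes it below -/
import Mathlib

section
/- For the elementary transvection t_{i,j}(ξ) = e + ξ e_{i,j} with i ≠ j, its m-th exterior power equals the product over all (m−1)-element subsets L of [n] \ {i,j} of elementary transvections t_{L∪{i}, L∪{j}}(sign(L,i)·sign(L,j)·ξ) in GL_N(R); in particular all these factors commute and Λ^m(t_{i,j}(ξ)) − e has rank at most binomial(n−2, m−1). -/
open Matrix

/-- Index type: `m`-element subsets of `{1,…,n}`. -/
abbrev ExtIdx (n m : ℕ) := {s : Finset (Fin n) // s.card = m}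

/-- The `m`-th exterior power of a matrix: the matrix of its `m × m` minors,
rows and columns indexed by `m`-element subsets in increasing order. -/
def extPow (R : Type) [CommRing R] (n m : ℕ) (g : Matrix (Fin n) (Fin n) R) :
    Matrix (ExtIdx n m) (ExtIdx n m) R :=
  Matrix.of fun I J =>
    (Matrix.of fun a b : Fin m =>
      g (I.1.orderIsoOfFin I.2 a) (J.1.orderIsoOfFin J.2 b)).det

/-- An elementary transvection `e + ξ e_{i,j}` as an element of `GL`. -/
def tGL (R : Type) [CommRing R] {ι : Type} [Fintype ι] [DecidableEq ι]
    (i j : ι) (hij : i ≠ j) (ξ : R) : GL ι R where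
  val := Matrix.transvection i j ξ
  inv := Matrix.transvection i j (-ξ)
  val_inv := by
    rw [Matrix.transvection_mul_transvection_same i j hij]; simp
  inv_val := by
    rw [Matrix.transvection_mul_transvection_same i j hij]; simp

/-- The elementary group `E(R)` generated by all elementary transvections. -/
def elemGL (R : Type) [CommRing R] (ι : Type) [Fintype ι] [DecidableEq ι] :
    Subgroup (GL ι R) :=
  Subgroup.closure {x | ∃ i j, ∃ hij : i ≠ j, ∃ ξ : R, x = tGL R i j hij ξ}

/-- `E(A)`: the subgroup generated by elementary transvections with parameter in `A`. -/
def elemGLIdeal (R : Type) [CommRing R] (ι : Type) [Fintype ι] [DecidableEq ι]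
    (A : Ideal R) : Subgroup (GL ι R) :=
  Subgroup.closure {x | ∃ i j, ∃ hij : i ≠ j, ∃ ξ : R, ξ ∈ A ∧ x = tGL R i j hij ξ}

/-- The smallest subgroup containing `K` and normalized by `H`:
the normal closure of `K` under conjugation by `H`. -/
def conjClosureBy {G : Type*} [Group G] (K H : Subgroup G) : Subgroup G :=
  Subgroup.closure {x | ∃ h ∈ H, ∃ y ∈ K, x = h * y * h⁻¹}

/-- The relative elementary subgroup `E(R, A) = E(A)^{E(R)}`. -/
def relElem (R : Type) [CommRing R] (ι : Type) [Fintype ι] [DecidableEq ι]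
    (A : Ideal R) : Subgroup (GL ι R) :=
  conjClosureBy (elemGLIdeal R ι A) (elemGL R ι)

/-- `Λ^m E_n(R)`: the exterior power of the elementary group, the subgroup of
`GL_N(R)` generated by the exterior powers of elementary transvections. -/
def extElem (R : Type) [CommRing R] (n m : ℕ) : Subgroup (GL (ExtIdx n m) R) :=
  Subgroup.closure {x | ∃ i j, ∃ _ : i ≠ j, ∃ ξ : R,
    (x : Matrix (ExtIdx n m) (ExtIdx n m) R) = extPow R n m (Matrix.transvection i j ξ)}

/-- `sign(L, i)`: the sign of the permutation sorting the list `(L, i)`. -/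
def signLI (R : Type) [CommRing R] {n : ℕ} (L : Finset (Fin n)) (i : Fin n) : R :=
  (-1 : R) ^ (L.filter fun l => i < l).card

/-- Replacing the element `i ∈ I` by `j ∉ I` in an `m`-element subset. -/
def swapIdx {n m : ℕ} (I : ExtIdx n m) (i j : Fin n) (hi : i ∈ I.1) (hj : j ∉ I.1) :
    ExtIdx n m :=
  ⟨insert j (I.1.erase i), by
    have h1 : j ∉ I.1.erase i := fun h => hj (Finset.mem_of_mem_erase h)
    have h2 : 1 ≤ m := I.2 ▸ Finset.card_pos.mpr ⟨i, hi⟩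
    rw [Finset.card_insert_of_notMem h1, Finset.card_erase_of_mem hi, I.2]
    omega⟩

/-- Reduction of `GL` along a ring homomorphism. -/
def glMap {ι : Type} [Fintype ι] [DecidableEq ι] {S S' : Type} [CommRing S] [CommRing S']
    (f : S →+* S') : GL ι S →* GL ι S' :=
  Units.map (RingHom.mapMatrix f).toMonoidHom

/-!
The minor of `e + ξ e_{i,j}` on rows `I` and columns `J` differs from the corresponding minor
of `e` only in the column of `J` carrying `j`; expanding it along that column leaves `δ_{I,J}`
plus `ξ` times a signed minor of `e`, which is nonzero exactly when `I = L ∪ {i}` and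
`J = L ∪ {j}`. So `Λ^m t_{i,j}(ξ) - e` is the sum of the matrix units `e_{L∪i, L∪j}` (with the
signs of the statement), and any two of them multiply to zero because `j ∉ L' ∪ {i}`. Hence the
transvections `e + e_{L∪i, L∪j}` commute and multiply to `e` plus that sum, and the nonzero rows
of the sum are the sets `L ∪ {i}`, of which there are `binomial(n-2, m-1)`.
-/

open Finset

theorem Commute.of_sub_one_mul_sub_one_eq_zero {A : Type*} [Ring A] {a b : A}
    (hab : (a - 1) * (b - 1) = 0) (hba : (b - 1) * (a - 1) = 0) : Commute a b := by
  have key (x y : A) : x * y = 1 + (x - 1) + (y - 1) + (x - 1) * (y - 1) := by noncomm_ring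
  rw [Commute, SemiconjBy, key a b, key b a, hab, hba, add_right_comm (1 : A)]

theorem Finset.noncommProd_eq_one_add_sum_sub_one {ι A : Type*} [Ring A] (s : Finset ι)
    (f : ι → A) (hf : ∀ x ∈ s, ∀ y ∈ s, (f x - 1) * (f y - 1) = 0)
    (hc : (s : Set ι).Pairwise (Function.onFun Commute f)) :
    s.noncommProd f hc = 1 + ∑ x ∈ s, (f x - 1) := by
  classical
  induction s using Finset.induction_on with
  | empty => simp
  | insert a s ha ih =>
    rw [noncommProd_insert_of_notMem s a f hc ha, sum_insert ha,
      ih (fun x hx y hy => hf x (mem_insert_of_mem hx) y (mem_insert_of_mem hy))]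
    have hzero : (f a - 1) * ∑ x ∈ s, (f x - 1) = 0 := by
      rw [mul_sum]
      exact sum_eq_zero fun x hx => hf a (mem_insert_self a s) x (mem_insert_of_mem hx)
    calc f a * (1 + ∑ x ∈ s, (f x - 1))
        = 1 + ((f a - 1) + ∑ x ∈ s, (f x - 1)) + (f a - 1) * ∑ x ∈ s, (f x - 1) := by
          noncomm_ring
      _ = 1 + ((f a - 1) + ∑ x ∈ s, (f x - 1)) := by rw [hzero, add_zero]

namespace Finset

variable {α : Type*} [LinearOrder α] {k : ℕ}

theorem card_filter_lt_orderEmbOfFin (s : Finset α) (h : #s = k) (a : Fin k) :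
    #{x ∈ s | x < s.orderEmbOfFin h a} = a := by
  set e := s.orderEmbOfFin h
  have hs : s = univ.map e.toEmbedding := (s.map_orderEmbOfFin_univ h).symm
  rw [hs, filter_map, card_map]
  simp [filter_gt_eq_Iio]

theorem orderEmbOfFin_comp_succAbove (s : Finset α) (h : #s = k + 1) {a : Fin (k + 1)} {x : α}
    (ha : s.orderEmbOfFin h a = x) (h' : #(s.erase x) = k) :
    s.orderEmbOfFin h ∘ a.succAbove = (s.erase x).orderEmbOfFin h' :=
  (orderEmbOfFin_unique h'
    (fun b => mem_erase.2 ⟨ha ▸ (s.orderEmbOfFin h).injective.ne (Fin.succAbove_ne a b),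
      orderEmbOfFin_mem _ _ _⟩)
    ((s.orderEmbOfFin h).strictMono.comp (Fin.strictMono_succAbove a)))

theorem exists_orderEmbOfFin_eq (s : Finset α) (h : #s = k) {x : α} (hx : x ∈ s) :
    ∃ a, s.orderEmbOfFin h a = x := by
  rwa [← Set.mem_range, range_orderEmbOfFin]

end Finset

namespace Matrix

variable {α : Type*} [LinearOrder α] {R : Type*} [CommRing R] {k : ℕ}

theorem det_updateCol_single_one (A : Matrix (Fin (k + 1)) (Fin (k + 1)) R) (a b : Fin (k + 1)) :
    (A.updateCol b (Pi.single a 1)).det =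
      (-1) ^ (a + b : ℕ) * (A.submatrix a.succAbove b.succAbove).det := by
  rw [← det_transpose, ← updateRow_transpose, ← adjugate_apply, adjugate_fin_succ_eq_det_submatrix,
    ← transpose_submatrix, det_transpose, add_comm]

theorem det_one_submatrix_orderEmbOfFin (I J : Finset α) (hI : #I = k) (hJ : #J = k) :
    ((1 : Matrix α α R).submatrix (I.orderEmbOfFin hI) (J.orderEmbOfFin hJ)).det =
      if I = J then 1 else 0 := by
  split_ifs with hIJ
  · subst hIJ
    rw [submatrix_one _ (I.orderEmbOfFin hI).injective, det_one]
  · obtain ⟨x, hxI, hxJ⟩ := not_subset.1 fun hsub => hIJ (eq_of_subset_of_card_le hsub (by omega))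
    obtain ⟨a, rfl⟩ := I.exists_orderEmbOfFin_eq hI hxI
    refine det_eq_zero_of_row_eq_zero a fun b => one_apply_ne fun hab => hxJ ?_
    exact hab ▸ J.orderEmbOfFin_mem hJ b

theorem transvection_submatrix_of_notMem {i j : α} (ξ : R) {J : Finset α} (hjJ : j ∉ J)
    (hJ : #J = k) (e : Fin k → α) :
    (transvection i j ξ).submatrix e (J.orderEmbOfFin hJ) =
      (1 : Matrix α α R).submatrix e (J.orderEmbOfFin hJ) := by
  ext a b
  have : J.orderEmbOfFin hJ b ≠ j := fun h => hjJ (h ▸ J.orderEmbOfFin_mem hJ b)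
  simp [transvection, this.symm]

theorem det_transvection_submatrix_orderEmbOfFin (i j : α) (ξ : R)
    (I J : Finset α) (hI : #I = k) (hJ : #J = k) :
    ((transvection i j ξ).submatrix (I.orderEmbOfFin hI) (J.orderEmbOfFin hJ)).det =
      (if I = J then 1 else 0) +
        if i ∈ I ∧ j ∈ J ∧ I.erase i = J.erase j then
          (-1) ^ (#{x ∈ I | x < i} + #{x ∈ J | x < j}) * ξ else 0 := by
  by_cases hjJ : j ∈ J
  swap
  · rw [transvection_submatrix_of_notMem ξ hjJ, det_one_submatrix_orderEmbOfFin,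
      if_neg (show ¬(i ∈ I ∧ j ∈ J ∧ _) from fun h => hjJ h.2.1), add_zero]
  obtain ⟨k, rfl⟩ : ∃ k', k = k' + 1 := Nat.exists_eq_succ_of_ne_zero (by grind [card_pos])
  set e := I.orderEmbOfFin hI
  set f := J.orderEmbOfFin hJ
  set A := (1 : Matrix α α R).submatrix e f
  set u : Fin (k + 1) → R := fun a => if e a = i then 1 else 0
  obtain ⟨b, hb⟩ : ∃ b, f b = j := J.exists_orderEmbOfFin_eq hJ hjJ
  have hsplit : (transvection i j ξ).submatrix e f = A.updateCol b ((A · b) + ξ • u) := by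
    ext a c
    rcases eq_or_ne c b with rfl | hcb
    · simp [A, u, transvection, single_apply, ← hb, eq_comm]
    · simp [A, transvection, updateCol_ne hcb, ← hb, hcb.symm]
  rw [hsplit, det_updateCol_add, updateCol_eq_self, det_one_submatrix_orderEmbOfFin,
    det_updateCol_smul]
  congr 1
  by_cases hiI : i ∈ I
  swap
  · have hu : u = 0 := funext fun a => if_neg fun h : e a = i => hiI (h ▸ I.orderEmbOfFin_mem hI a)
    rw [hu, det_eq_zero_of_column_eq_zero b (fun a => by simp), mul_zero, if_neg fun h => hiI h.1]
  obtain ⟨a, ha⟩ : ∃ a, e a = i := I.exists_orderEmbOfFin_eq hI hiI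
  have hu : u = Pi.single a 1 := by
    ext a'
    simp [u, Pi.single_apply, ← ha, e.injective.eq_iff]
  have hpos_a : (a : ℕ) = #{x ∈ I | x < i} := by rw [← ha, card_filter_lt_orderEmbOfFin]
  have hpos_b : (b : ℕ) = #{x ∈ J | x < j} := by rw [← hb, card_filter_lt_orderEmbOfFin]
  have hIi : #(I.erase i) = k := by rw [card_erase_of_mem hiI, hI]; rfl
  have hJj : #(J.erase j) = k := by rw [card_erase_of_mem hjJ, hJ]; rfl
  rw [hu, det_updateCol_single_one, submatrix_submatrix, orderEmbOfFin_comp_succAbove I hI ha hIi,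
    orderEmbOfFin_comp_succAbove J hJ hb hJj, det_one_submatrix_orderEmbOfFin, hpos_a, hpos_b]
  simp only [hiI, hjJ, true_and]
  split_ifs <;> ring

end Matrix

section ExtPow

variable {R : Type} [CommRing R] {n m : ℕ}

theorem neg_one_pow_card_filter_lt_insert {L : Finset (Fin n)} {x : Fin n} (hx : x ∉ L) :
    (-1 : R) ^ #{y ∈ insert x L | y < x} = (-1) ^ #L * signLI R L x := by
  have hgt : {y ∈ L | ¬y < x} = {y ∈ L | x < y} :=
    filter_congr fun y hy => not_lt.trans (ne_of_mem_of_not_mem hy hx).symm.le_iff_lt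
  rw [signLI, filter_insert, if_neg (lt_irrefl x),
    ← card_filter_add_card_filter_not (s := L) (p := (· < x)), hgt, pow_add, mul_assoc,
    ← pow_add, ← two_mul, pow_mul, neg_one_sq, one_pow, mul_one]

theorem extPow_transvection_apply (i j : Fin n) (ξ : R) (I J : ExtIdx n m) :
    extPow R n m (transvection i j ξ) I J = (1 : Matrix (ExtIdx n m) (ExtIdx n m) R) I J +
      if i ∈ I.1 ∧ j ∈ J.1 ∧ I.1.erase i = J.1.erase j then
        signLI R (I.1.erase i) i * signLI R (I.1.erase i) j * ξ else 0 := by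
  change ((transvection i j ξ).submatrix (I.1.orderEmbOfFin I.2) (J.1.orderEmbOfFin J.2)).det = _
  rw [det_transvection_submatrix_orderEmbOfFin, one_apply]
  congr 1
  · exact if_congr Subtype.ext_iff.symm rfl rfl
  refine if_ctx_congr Iff.rfl (fun ⟨hi, hj, hL⟩ => ?_) fun _ => rfl
  set L := I.1.erase i
  have hIi : #{x ∈ I.1 | x < i} = #{x ∈ insert i L | x < i} := by rw [insert_erase hi]
  have hJj : #{x ∈ J.1 | x < j} = #{x ∈ insert j L | x < j} := by rw [hL, insert_erase hj]
  have hsq : (-1 : R) ^ #L * (-1) ^ #L = 1 := by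
    rw [← pow_add, ← two_mul, pow_mul, neg_one_sq, one_pow]
  rw [hIi, hJj, pow_add, neg_one_pow_card_filter_lt_insert (notMem_erase i _),
    neg_one_pow_card_filter_lt_insert (hL ▸ notMem_erase j _)]
  linear_combination (signLI R L i * signLI R L j * ξ) * hsq

def extPowTransvectionFactor (hm : 1 ≤ m) (i j : Fin n) (ξ : R) (L : Finset (Fin n)) :
    Matrix (ExtIdx n m) (ExtIdx n m) R :=
  if h : #L = m - 1 ∧ i ∉ L ∧ j ∉ L then
    transvection
      (⟨insert i L, by rw [card_insert_of_notMem h.2.1, h.1, Nat.sub_add_cancel hm]⟩ : ExtIdx n m)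
      (⟨insert j L, by rw [card_insert_of_notMem h.2.2, h.1, Nat.sub_add_cancel hm]⟩ : ExtIdx n m)
      (signLI R L i * signLI R L j * ξ)
  else 1

section extPowTransvectionFactor

variable (hm : 1 ≤ m) (i j : Fin n) (ξ : R)

theorem extPowTransvectionFactor_sub_one_apply (L : Finset (Fin n)) (I J : ExtIdx n m) :
    (extPowTransvectionFactor hm i j ξ L - 1) I J =
      if (#L = m - 1 ∧ i ∉ L ∧ j ∉ L) ∧ I.1 = insert i L ∧ J.1 = insert j L then
        signLI R L i * signLI R L j * ξ else 0 := by
  by_cases hL : #L = m - 1 ∧ i ∉ L ∧ j ∉ L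
  · simp [extPowTransvectionFactor, hL, transvection, single_apply, Subtype.ext_iff, eq_comm]
  · simp [extPowTransvectionFactor, hL]

theorem sum_extPowTransvectionFactor_sub_one_apply (I J : ExtIdx n m) :
    (∑ L with #L = m - 1 ∧ i ∉ L ∧ j ∉ L, (extPowTransvectionFactor hm i j ξ L - 1)) I J =
      if i ∈ I.1 ∧ j ∈ J.1 ∧ I.1.erase i = J.1.erase j then
        signLI R (I.1.erase i) i * signLI R (I.1.erase i) j * ξ else 0 := by
  have hsupp (L : Finset (Fin n)) :
      ((#L = m - 1 ∧ i ∉ L ∧ j ∉ L) ∧ I.1 = insert i L ∧ J.1 = insert j L) ↔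
        L = I.1.erase i ∧ (i ∈ I.1 ∧ j ∈ J.1 ∧ I.1.erase i = J.1.erase j) := by
    grind
  rw [Matrix.sum_apply, sum_filter_of_ne fun L _ hL => not_not.1 fun hL' => hL ?_]
  · simp_rw [extPowTransvectionFactor_sub_one_apply, hsupp, ite_and]
    rw [sum_ite_eq', if_pos (mem_univ _)]
  · rw [extPowTransvectionFactor_sub_one_apply, if_neg fun h => hL' h.1]

theorem extPow_transvection_sub_one :
    extPow R n m (transvection i j ξ) - 1 =
      ∑ L with #L = m - 1 ∧ i ∉ L ∧ j ∉ L, (extPowTransvectionFactor hm i j ξ L - 1) := by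
  ext I J
  rw [Matrix.sub_apply, extPow_transvection_apply, sum_extPowTransvectionFactor_sub_one_apply,
    add_sub_cancel_left]

variable {i j} in
theorem extPowTransvectionFactor_sub_one_mul_sub_one (hij : i ≠ j) (L L' : Finset (Fin n)) :
    (extPowTransvectionFactor hm i j ξ L - 1) * (extPowTransvectionFactor hm i j ξ L' - 1) = 0 := by
  ext I J
  rw [mul_apply, Matrix.zero_apply]
  refine sum_eq_zero fun K _ => ?_
  rw [extPowTransvectionFactor_sub_one_apply, extPowTransvectionFactor_sub_one_apply]
  split_ifs with hL hL'
  · have hjK : j ∈ K.1 := hL.2.2 ▸ mem_insert_self j L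
    rw [hL'.2.1, mem_insert] at hjK
    exact (hjK.elim (hij ·.symm) hL'.1.2.2).elim
  all_goals simp

end extPowTransvectionFactor

theorem rank_extPow_transvection_sub_one_le (hmn : m < n) {i j : Fin n} (hij : i ≠ j) (ξ : R) :
    (extPow R n m (transvection i j ξ) - 1).rank ≤ (n - 2).choose (m - 1) := by
  rcases subsingleton_or_nontrivial R with hR | hR
  · -- `Matrix.rank` is `1` over the zero ring, whatever the size of the matrix
    rw [Matrix.rank_subsingleton]
    exact Nat.choose_pos (by omega)
  have hsupp : Function.support (extPow R n m (transvection i j ξ) - 1).row ⊆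
      ({I : ExtIdx n m | i ∈ I.1 ∧ j ∉ I.1} : Finset _) := by
    intro I hI
    obtain ⟨J, hJ⟩ := Function.ne_iff.1 hI
    rw [Pi.zero_apply, row_apply, Matrix.sub_apply, extPow_transvection_apply,
      add_sub_cancel_left] at hJ
    obtain ⟨hi, -, hL⟩ := (ite_ne_right_iff.1 hJ).1
    rw [mem_coe, mem_filter]
    exact ⟨mem_univ I, hi, fun hjI => notMem_erase j J.1 (hL ▸ mem_erase.2 ⟨hij.symm, hjI⟩)⟩
  refine (rank_le_card_of_support_subset _ _ hsupp).trans ?_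
  calc #{I : ExtIdx n m | i ∈ I.1 ∧ j ∉ I.1}
      ≤ #(powersetCard (m - 1) ({i, j}ᶜ : Finset (Fin n))) := by
        refine card_le_card_of_injOn (fun I => I.1.erase i) (fun I hI => ?_) fun I hI J hJ hIJ => ?_
        · obtain ⟨-, hi, hj⟩ := mem_filter.1 hI
          rw [mem_coe, mem_powersetCard, card_erase_of_mem hi, I.2]
          exact ⟨fun x hx => by grind [mem_compl], rfl⟩
        · have hi := (mem_filter.1 hI).2.1
          have hi' := (mem_filter.1 hJ).2.1
          have hIJ : I.1.erase i = J.1.erase i := hIJ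
          exact Subtype.ext (by rw [← insert_erase hi, hIJ, insert_erase hi'])
    _ = (n - 2).choose (m - 1) := by
        rw [card_powersetCard, card_compl, card_pair hij, Fintype.card_fin]

end ExtPow

/-- The exterior power of an elementary transvection `t_{i,j}(ξ)` is the product over
all `(m-1)`-element subsets `L ⊆ [n] \ {i,j}` of the elementary transvections
`t_{L∪i, L∪j}(sign(L,i)·sign(L,j)·ξ)`; all these factors commute, and
`Λ^m t_{i,j}(ξ) - e` has rank at most `(n-2).choose (m-1)`. -/
theorem extPow_transvection_eq_prod (R : Type) [CommRing R] (n m : ℕ)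
    (hm1 : 1 ≤ m) (hmn : m < n)
    (i j : Fin n) (hij : i ≠ j) (ξ : R) :
    let T : Finset (Fin n) → Matrix (ExtIdx n m) (ExtIdx n m) R := fun L =>
      if h : L.card = m - 1 ∧ i ∉ L ∧ j ∉ L then
        Matrix.transvection
          (⟨insert i L, by rw [Finset.card_insert_of_notMem h.2.1, h.1]; omega⟩ : ExtIdx n m)
          (⟨insert j L, by rw [Finset.card_insert_of_notMem h.2.2, h.1]; omega⟩ : ExtIdx n m)
          (signLI R L i * signLI R L j * ξ)
      else 1
    let 𝓛 : Finset (Finset (Fin n)) :=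
      Finset.univ.filter fun L => L.card = m - 1 ∧ i ∉ L ∧ j ∉ L
    (∀ L ∈ 𝓛, ∀ L' ∈ 𝓛, Commute (T L) (T L')) ∧
    (∀ hc : (𝓛 : Set (Finset (Fin n))).Pairwise (Function.onFun Commute T),
      𝓛.noncommProd T hc = extPow R n m (Matrix.transvection i j ξ)) ∧
    (extPow R n m (Matrix.transvection i j ξ) - 1).rank ≤ (n - 2).choose (m - 1) := by
  intro T 𝓛
  have horth (L L' : Finset (Fin n)) : (T L - 1) * (T L' - 1) = 0 :=
    extPowTransvectionFactor_sub_one_mul_sub_one hm1 ξ hij L L'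
  have hsum : ∑ L ∈ 𝓛, (T L - 1) = extPow R n m (transvection i j ξ) - 1 :=
    (extPow_transvection_sub_one hm1 i j ξ).symm
  refine ⟨fun L _ L' _ => .of_sub_one_mul_sub_one_eq_zero (horth L L') (horth L' L),
    fun hc => ?_, rank_extPow_transvection_sub_one_le hmn hij ξ⟩
  rw [noncommProd_eq_one_add_sum_sub_one 𝓛 T (fun L _ L' _ => horth L L') hc, hsum,
    add_sub_cancel]
end

section
/- For any g ∈ GL_n(R), det(Λ^m g) = (det g)^{binomial(n−1, m−1)}. -/
open Matrix

/-!
Cauchy–Binet makes `extPow` multiplicative, so over a field Gaussian elimination reduces the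
claim to diagonal matrices and transvections. For `diagonal d` the exterior power is diagonal
with entries `∏ i ∈ I, d i`, and each `i` lies in `(n - 1).choose (m - 1)` of the sets `I`.
For a transvection, `det (Λ^m T(X))` is a unit of `ℤ[X]` (with inverse `det (Λ^m T(-X))`)
taking the value `1` at `X = 0`, hence it is `1`. The general case follows by specialising the
generic matrix over `ℤ[x_ij]`, a domain, so that the identity can be checked in its fraction
field.
-/

open Finset Equiv

section CauchyBinet

variable {R ι : Type*} [CommRing R] {k : ℕ}

theorem Matrix.det_mul_eq_sum_det_submatrix_mul_prod [Fintype ι] (A : Matrix (Fin k) ι R)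
    (B : Matrix ι (Fin k) R) :
    (A * B).det = ∑ f : Fin k → ι, (A.submatrix id f).det * ∏ i, B (f i) i := by
  simp only [det_apply', mul_apply, prod_univ_sum, mul_sum, Fintype.piFinset_univ]
  rw [sum_comm]
  refine sum_congr rfl fun f _ => ?_
  simp only [submatrix_apply, id, sum_mul, prod_mul_distrib, mul_assoc]

theorem Matrix.det_submatrix_eq_zero_of_not_injective (A : Matrix (Fin k) ι R)
    {f : Fin k → ι} (hf : ¬Function.Injective f) : (A.submatrix id f).det = 0 := by
  obtain ⟨i, j, hfij, hij⟩ : ∃ i j, f i = f j ∧ i ≠ j := by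
    simpa [Function.Injective] using hf
  exact det_zero_of_column_eq hij fun r => by simp [hfij]

variable [LinearOrder ι]

theorem Finset.image_orderEmbOfFin_comp_perm (s : Finset ι) (h : s.card = k)
    (τ : Perm (Fin k)) : univ.image (s.orderEmbOfFin h ∘ τ) = s := by
  rw [← image_image, image_univ_equiv, image_orderEmbOfFin_univ]

theorem Finset.sum_injective_eq_sum_orderEmbOfFin_comp_perm [Fintype ι] {M : Type*}
    [AddCommMonoid M] (g : (Fin k → ι) → M) :
    ∑ f ∈ univ.filter Function.Injective, g f =
      ∑ s : {s : Finset ι // s.card = k}, ∑ τ : Perm (Fin k), g (s.1.orderEmbOfFin s.2 ∘ τ) := by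
  rw [← Fintype.sum_prod_type']
  refine (sum_bij (fun x _ => x.1.1.orderEmbOfFin x.1.2 ∘ x.2) ?_ ?_ ?_ fun _ _ => rfl).symm
  · intro x _
    simpa using (x.1.1.orderEmbOfFin x.1.2).injective.comp x.2.injective
  · rintro ⟨s, τ⟩ _ ⟨s', τ'⟩ _ h
    obtain rfl : s = s' := Subtype.ext <| by
      rw [← image_orderEmbOfFin_comp_perm s.1 s.2 τ, ← image_orderEmbOfFin_comp_perm s'.1 s'.2 τ',
        h]
    obtain rfl : τ = τ' := Equiv.ext fun i => (s.1.orderEmbOfFin s.2).injective (congrFun h i)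
    rfl
  · intro f hf
    have hf : Function.Injective f := (mem_filter.1 hf).2
    set s := univ.image f
    have hs : s.card = k := by simp [s, card_image_of_injective _ hf]
    let e : Fin k ≃ s := Equiv.ofBijective (fun i => ⟨f i, mem_image_of_mem f (mem_univ i)⟩)
      ((Fintype.bijective_iff_injective_and_card _).2
        ⟨fun i j hij => hf (congrArg Subtype.val hij), by simp [hs]⟩)
    refine ⟨(⟨s, hs⟩, e.trans (s.orderIsoOfFin hs).symm.toEquiv), mem_univ _, funext fun i => ?_⟩
    simp [← coe_orderIsoOfFin_apply, e]

/-- **Cauchy–Binet formula**. -/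
theorem Matrix.det_mul_eq_sum_det_mul_det [Fintype ι] (A : Matrix (Fin k) ι R)
    (B : Matrix ι (Fin k) R) :
    (A * B).det = ∑ s : {s : Finset ι // s.card = k},
      (A.submatrix id (s.1.orderEmbOfFin s.2)).det *
        (B.submatrix (s.1.orderEmbOfFin s.2) id).det := by
  have hinj : ∀ f ∈ univ, (A.submatrix id f).det * ∏ i, B (f i) i ≠ 0 → Function.Injective f :=
    fun f _ hf => by_contra fun hinj => hf <| by
      rw [det_submatrix_eq_zero_of_not_injective A hinj, zero_mul]
  rw [det_mul_eq_sum_det_submatrix_mul_prod, ← sum_filter_of_ne hinj,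
    sum_injective_eq_sum_orderEmbOfFin_comp_perm]
  refine sum_congr rfl fun s _ => ?_
  set e := s.1.orderEmbOfFin s.2
  calc ∑ τ : Perm (Fin k), (A.submatrix id (e ∘ τ)).det * ∏ i, B (e (τ i)) i
      = ∑ τ : Perm (Fin k), (Perm.sign τ : R) * (A.submatrix id e).det * ∏ i, B (e (τ i)) i := by
        refine sum_congr rfl fun τ _ => ?_
        rw [← det_permute']
        rfl
    _ = _ := by
        rw [det_apply' (B.submatrix e id), mul_sum]
        refine sum_congr rfl fun τ _ => ?_
        simp only [submatrix_apply, id]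
        ring

end CauchyBinet

theorem Matrix.transvection_map {R S ι : Type*} [CommRing R] [CommRing S] [DecidableEq ι]
    (f : R →+* S) (i j : ι) (c : R) :
    (transvection i j c).map f = transvection i j (f c) := by
  ext a b
  simp [transvection, map_apply, one_apply, single_apply, apply_ite f]

section ExtPow

variable {R : Type} [CommRing R] {n m : ℕ}

theorem extPow_apply (g : Matrix (Fin n) (Fin n) R) (I J : ExtIdx n m) :
    extPow R n m g I J = (g.submatrix (I.1.orderEmbOfFin I.2) (J.1.orderEmbOfFin J.2)).det :=
  rfl

theorem extPow_mul (A B : Matrix (Fin n) (Fin n) R) :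
    extPow R n m (A * B) = extPow R n m A * extPow R n m B := by
  ext I J
  rw [extPow_apply, submatrix_mul _ _ _ id _ Function.bijective_id, det_mul_eq_sum_det_mul_det]
  rfl

theorem extPow_map {S : Type} [CommRing S] (f : R →+* S) (g : Matrix (Fin n) (Fin n) R) :
    extPow S n m (g.map f) = (extPow R n m g).map f := by
  ext I J
  simp only [map_apply, extPow_apply, RingHom.map_det]
  rfl

theorem extPow_diagonal (d : Fin n → R) :
    extPow R n m (diagonal d) = diagonal fun I : ExtIdx n m => ∏ i ∈ I.1, d i := by
  ext I J
  rw [extPow_apply]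
  rcases eq_or_ne I J with rfl | hIJ
  · rw [submatrix_diagonal _ _ (I.1.orderEmbOfFin I.2).injective, det_diagonal,
      diagonal_apply_eq, ← prod_coe_sort I.1]
    exact Fintype.prod_equiv (I.1.orderIsoOfFin I.2).toEquiv _ _ fun _ => rfl
  · obtain ⟨i, hiI, hiJ⟩ : ∃ i ∈ I.1, i ∉ J.1 := not_subset.1 fun h =>
      hIJ (Subtype.ext (eq_of_subset_of_card_le h (by rw [I.2, J.2])))
    obtain ⟨a, rfl⟩ : i ∈ Set.range (I.1.orderEmbOfFin I.2) := by simpa using hiI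
    rw [diagonal_apply_ne _ hIJ]
    refine det_eq_zero_of_row_eq_zero a fun b => diagonal_apply_ne _ fun h => hiJ ?_
    simp [h]

theorem extPow_one : extPow R n m (1 : Matrix (Fin n) (Fin n) R) = 1 := by
  rw [← diagonal_one, extPow_diagonal]
  simp

theorem card_filter_mem_extIdx (hm : 1 ≤ m) (i : Fin n) :
    #{I : ExtIdx n m | i ∈ I.1} = (n - 1).choose (m - 1) := by
  have h := card_filter_powersetCard_subset {i} univ m (subset_univ _) (by simpa using hm)
  rw [card_singleton, card_univ, Fintype.card_fin] at h
  rw [← h, ← card_map (Function.Embedding.subtype _)]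
  congr 1
  ext s
  simp [mem_powersetCard, and_comm]

theorem det_extPow_diagonal (hm : 1 ≤ m) (d : Fin n → R) :
    (extPow R n m (diagonal d)).det = (∏ i, d i) ^ (n - 1).choose (m - 1) := by
  rw [extPow_diagonal, det_diagonal, ← prod_pow,
    prod_comm' (t' := univ) (s' := fun i => {I : ExtIdx n m | i ∈ I.1}) (by simp)]
  simp only [prod_const, card_filter_mem_extIdx hm]

theorem det_extPow_transvection (i j : Fin n) (hij : i ≠ j) (c : R) :
    (extPow R n m (transvection i j c)).det = 1 := by
  set p := (extPow (Polynomial ℤ) n m (transvection i j Polynomial.X)).det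
  have hp : IsUnit p := by
    refine .of_mul_eq_one (extPow (Polynomial ℤ) n m (transvection i j (-Polynomial.X))).det ?_
    rw [← det_mul, ← extPow_mul, transvection_mul_transvection_same _ _ hij, add_neg_cancel,
      transvection_zero, extPow_one, det_one]
  have hp0 : p.eval 0 = 1 := by
    rw [← Polynomial.coe_evalRingHom, RingHom.map_det, RingHom.mapMatrix_apply, ← extPow_map,
      transvection_map]
    simp [extPow_one]
  have hp1 : p = 1 := by
    rw [Polynomial.eq_C_of_natDegree_eq_zero (Polynomial.natDegree_eq_zero_of_isUnit hp),
      Polynomial.coeff_zero_eq_eval_zero, hp0, Polynomial.C_1]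
  have := congrArg (Polynomial.eval₂RingHom (Int.castRingHom R) c) hp1
  rwa [RingHom.map_det, RingHom.mapMatrix_apply, ← extPow_map, transvection_map,
    Polynomial.coe_eval₂RingHom, Polynomial.eval₂_X, Polynomial.eval₂_one] at this

theorem det_extPow_of_field {K : Type} [Field K] (hm : 1 ≤ m) (M : Matrix (Fin n) (Fin n) K) :
    (extPow K n m M).det = M.det ^ (n - 1).choose (m - 1) := by
  induction M using diagonal_transvection_induction with
  | hdiag d => rw [det_extPow_diagonal hm, det_diagonal]
  | htransvec t =>
    rw [t.det, one_pow]
    exact det_extPow_transvection _ _ t.hij _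
  | hmul A B hA hB => rw [extPow_mul, det_mul, hA, hB, det_mul, mul_pow]

theorem det_extPow_eq_det_pow (hm : 1 ≤ m) (M : Matrix (Fin n) (Fin n) R) :
    (extPow R n m M).det = M.det ^ (n - 1).choose (m - 1) := by
  let X := mvPolynomialX (Fin n) (Fin n) ℤ
  have hX : (extPow _ n m X).det = X.det ^ (n - 1).choose (m - 1) := by
    apply IsFractionRing.injective (MvPolynomial (Fin n × Fin n) ℤ)
      (FractionRing (MvPolynomial (Fin n × Fin n) ℤ))
    rw [map_pow, RingHom.map_det, RingHom.map_det, RingHom.mapMatrix_apply,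
      RingHom.mapMatrix_apply, ← extPow_map, det_extPow_of_field hm]
  have := congrArg (MvPolynomial.eval₂Hom (Int.castRingHom R) fun p => M p.1 p.2) hX
  rwa [map_pow, RingHom.map_det, RingHom.map_det, RingHom.mapMatrix_apply,
    RingHom.mapMatrix_apply, ← extPow_map, MvPolynomial.coe_eval₂Hom, mvPolynomialX_map_eval₂]
    at this

end ExtPow

theorem det_extPow_general (R : Type) [CommRing R] (n m : ℕ)
    (hm1 : 1 ≤ m) (g : GL (Fin n) R) :
    (extPow R n m (g : Matrix (Fin n) (Fin n) R)).det =
      ((g : Matrix (Fin n) (Fin n) R).det) ^ ((n - 1).choose (m - 1)) :=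
  det_extPow_eq_det_pow hm1 _

/-- For any `g ∈ GL_n(R)`, `det (Λ^m g) = (det g) ^ (n-1).choose (m-1)`. -/
theorem det_extPow (R : Type) [CommRing R] (n m : ℕ)
    (hn : 1 ≤ n) (hm1 : 1 ≤ m) (hmn : m ≤ n) (g : GL (Fin n) R) :
    (extPow R n m (g : Matrix (Fin n) (Fin n) R)).det =
      ((g : Matrix (Fin n) (Fin n) R).det) ^ ((n - 1).choose (m - 1)) :=
  det_extPow_general R n m hm1 g
end

section
/- Let I, J ∈ Λ^m[n] be distinct, and let i, j ∈ [n] with i ∉ I and j ∉ J, i ≠ j. Then the exterior transvection Λ^m t_{j,i}(ζ) commutes with t_{I,J}(ξ): [t_{I,J}(ξ), Λ^m t_{j,i}(ζ)] = e. -/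
open Matrix
open scoped commutatorElement

/-!
Write `M = Λ^m t_{j,i}(ζ)`; since `t_{I,J}(ξ) = e + ξ e_{I,J}`, it suffices that `M` commutes with
`e_{I,J}`, i.e. that column `I` and row `J` of `M` vanish off the diagonal and `M_{II} = M_{JJ}`.
The entry `M_{K,L}` is the minor of `t_{j,i}(ζ)` on rows `K` and columns `L`. A diagonal minor is
the identity or a transvection, so has determinant `1`. For `K ≠ L` some column `x ∈ L \ K` of
the minor can only be nonzero at row `j` when `x = i`; so it vanishes when `j ∉ K` (row `J`, as
`j ∉ J`) or `i ∉ L` (column `I`, as `i ∉ I`).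
-/

namespace Matrix

section Commute

variable {ι α : Type*} [Fintype ι] [DecidableEq ι] [CommSemiring α]

theorem commute_single_of_col_eq_zero_of_row_eq_zero {M : Matrix ι ι α} {I J : ι} (c : α)
    (hcol : ∀ K, K ≠ I → M K I = 0) (hrow : ∀ L, L ≠ J → M J L = 0) (hdiag : M I I = M J J) :
    Commute (single I J c) M := by
  ext K L
  by_cases hK : K = I <;> by_cases hL : L = J
  · subst hK hL
    rw [single_mul_apply_same, mul_single_apply_same, hdiag, mul_comm]
  · subst hK
    rw [single_mul_apply_same, mul_single_apply_of_ne _ _ _ _ _ hL, hrow L hL, mul_zero]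
  · subst hL
    rw [single_mul_apply_of_ne _ _ _ _ _ hK, mul_single_apply_same, hcol K hK, zero_mul]
  · rw [single_mul_apply_of_ne _ _ _ _ _ hK, mul_single_apply_of_ne _ _ _ _ _ hL]

end Commute

section Transvection

variable {α β R : Type*} [DecidableEq α] [DecidableEq β] [CommRing R]

theorem commute_transvection_of_col_eq_zero_of_row_eq_zero [Fintype β] {M : Matrix β β R}
    {I J : β} (c : R) (hcol : ∀ K, K ≠ I → M K I = 0) (hrow : ∀ L, L ≠ J → M J L = 0)
    (hdiag : M I I = M J J) : Commute (transvection I J c) M :=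
  (Commute.one_left M).add_left
    (commute_single_of_col_eq_zero_of_row_eq_zero c hcol hrow hdiag)

theorem submatrix_transvection_eq_one {e : α → β} (he : Function.Injective e) {i j : β} (c : R)
    (h : i ∉ Set.range e ∨ j ∉ Set.range e) : (transvection i j c).submatrix e e = 1 := by
  ext a b
  have hsingle : single i j c (e a) (e b) = 0 := by
    rw [single_apply, if_neg]
    rintro ⟨hi, hj⟩
    rcases h with h | h
    exacts [h ⟨a, hi.symm⟩, h ⟨b, hj.symm⟩]
  simp only [transvection, submatrix_apply, add_apply, hsingle, add_zero, one_apply, he.eq_iff]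

theorem submatrix_transvection {e : α → β} (he : Function.Injective e) {a b : α} (c : R) :
    (transvection (e a) (e b) c).submatrix e e = transvection a b c := by
  ext a' b'
  simp only [transvection, submatrix_apply, add_apply, one_apply, single_apply, he.eq_iff]

theorem det_submatrix_transvection_of_ne [Fintype α] {e : α → β} (he : Function.Injective e)
    {i j : β} (hij : i ≠ j) (c : R) : ((transvection i j c).submatrix e e).det = 1 := by
  by_cases h : i ∈ Set.range e ∧ j ∈ Set.range e
  · obtain ⟨⟨a, rfl⟩, ⟨b, rfl⟩⟩ := h
    rw [submatrix_transvection he, det_transvection_of_ne _ _ (ne_of_apply_ne e hij)]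
  · rw [submatrix_transvection_eq_one he c (not_and_or.mp h), det_one]

theorem det_submatrix_transvection_eq_zero [Fintype α] (e e' : α → β) {i j : β} (c : R) (b : α)
    (hb : e' b ∉ Set.range e) (h : i ∉ Set.range e ∨ j ≠ e' b) :
    ((transvection i j c).submatrix e e').det = 0 := by
  refine det_eq_zero_of_column_eq_zero b fun a => ?_
  have hab : e a ≠ e' b := fun hab => hb ⟨a, hab⟩
  rw [submatrix_apply, transvection, add_apply, one_apply_ne hab, zero_add, single_apply, if_neg]
  rintro ⟨hi, hj⟩
  rcases h with h | h
  exacts [h ⟨a, hi.symm⟩, h hj]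

end Transvection

end Matrix

section ExteriorPower

variable {R : Type} [CommRing R] {n m : ℕ}

theorem extPow_apply_s7 (g : Matrix (Fin n) (Fin n) R) (K L : ExtIdx n m) :
    extPow R n m g K L = (g.submatrix (K.1.orderEmbOfFin K.2) (L.1.orderEmbOfFin L.2)).det :=
  rfl

theorem extPow_transvection_apply_self {i j : Fin n} (hij : i ≠ j) (c : R) (K : ExtIdx n m) :
    extPow R n m (transvection i j c) K K = 1 := by
  rw [extPow_apply_s7]
  exact det_submatrix_transvection_of_ne (K.1.orderEmbOfFin K.2).injective hij c

theorem extPow_transvection_apply_of_ne (i j : Fin n) (c : R) {K L : ExtIdx n m} (hKL : K ≠ L)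
    (h : i ∉ K.1 ∨ j ∉ L.1) : extPow R n m (transvection i j c) K L = 0 := by
  have hLK : ¬ L.1 ⊆ K.1 := fun hLK =>
    hKL (Subtype.ext (Finset.eq_of_subset_of_card_le hLK (by rw [K.2, L.2])).symm)
  obtain ⟨x, hxL, hxK⟩ := Finset.not_subset.mp hLK
  obtain ⟨b, rfl⟩ : x ∈ Set.range (L.1.orderEmbOfFin L.2) := by
    rwa [Finset.range_orderEmbOfFin]
  rw [extPow_apply_s7]
  refine det_submatrix_transvection_eq_zero _ _ c b
    (by rwa [Finset.range_orderEmbOfFin]) ?_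
  rw [Finset.range_orderEmbOfFin]
  exact h.imp id fun hj hjb => hj (hjb ▸ hxL)

end ExteriorPower

theorem commutator_type_one_general (R : Type) [CommRing R] (n m : ℕ)
    (I J : ExtIdx n m) (hIJ : I ≠ J) (i j : Fin n) (hij : i ≠ j)
    (hiI : i ∉ I.1) (hjJ : j ∉ J.1) (ξ ζ : R) (u : GL (ExtIdx n m) R)
    (hu : (u : Matrix (ExtIdx n m) (ExtIdx n m) R) =
      extPow R n m (Matrix.transvection j i ζ)) :
    ⁅tGL R I J hIJ ξ, u⁆ = 1 := by
  rw [commutatorElement_eq_one_iff_mul_comm]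
  ext1
  rw [Units.val_mul, Units.val_mul, hu]
  refine (commute_transvection_of_col_eq_zero_of_row_eq_zero (I := I) (J := J) ξ ?_ ?_ ?_).eq
  · exact fun K hK => extPow_transvection_apply_of_ne j i ζ hK (Or.inr hiI)
  · exact fun L hL => extPow_transvection_apply_of_ne j i ζ hL.symm (Or.inl hjJ)
  · rw [extPow_transvection_apply_self hij.symm, extPow_transvection_apply_self hij.symm]

/-- First-type commutation: if `i ∉ I` and `j ∉ J` (with `i ≠ j`), then the exterior
transvection `Λ^m t_{j,i}(ζ)` commutes with `t_{I,J}(ξ)`. -/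
theorem commutator_type_one (R : Type) [CommRing R] (n m : ℕ)
    (hn : 3 ≤ n) (hm1 : 1 ≤ m) (hmn : m < n)
    (I J : ExtIdx n m) (hIJ : I ≠ J) (i j : Fin n) (hij : i ≠ j)
    (hiI : i ∉ I.1) (hjJ : j ∉ J.1) (ξ ζ : R) (u : GL (ExtIdx n m) R)
    (hu : (u : Matrix (ExtIdx n m) (ExtIdx n m) R) =
      extPow R n m (Matrix.transvection j i ζ)) :
    ⁅tGL R I J hIJ ξ, u⁆ = 1 :=
  commutator_type_one_general R n m I J hIJ i j hij hiI hjJ ξ ζ u hu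
end
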